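/- For fixed a, f, σ with a² < 1, f ≠ 0, σ > 0, the function ϑ ↦ γ_*(ϑ) is differentiable on (0, ∞) with derivative γ̇_*(ϑ) = ϑ + ϑ·(f²ϑ² + σ²(1+a²))/√((σ²(1−a²) − f²ϑ²)² + 4f²ϑ²σ²), this derivative is strictly positive for every ϑ > 0, and consequently γ_* is strictly increasing on (0, ∞). -/

import Mathlib

/-!
The radicand `R` of `γ_*` has derivative `4f²ϑ(f²ϑ² + σ²(1+a²))`, so by the chain rule
`γ̇_* = ϑ + ϑ(f²ϑ² + σ²(1+a²))/√R`, a positive number plus a nonnegative one when `ϑ > 0`.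
The formula needs `R > 0`: `R = (σ²(1−a²) − f²ϑ²)² + 4f²ϑ²σ²` can only vanish if `σ = 0`,
and then `R = f⁴ϑ⁴`.
-/

noncomputable section

namespace HiddenAR

/-- The stationary filtering error variance as a function of the noise parameter `ϑ = b`:
`γ_*(ϑ) = (f²ϑ² − σ²(1−a²))/(2f²) + (1/(2f²))·√((σ²(1−a²) − f²ϑ²)² + 4f²ϑ²σ²)`. -/
def gammaStar (a f σ ϑ : ℝ) : ℝ :=
  (f ^ 2 * ϑ ^ 2 - σ ^ 2 * (1 - a ^ 2)) / (2 * f ^ 2)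
    + (1 / (2 * f ^ 2)) *
      Real.sqrt ((σ ^ 2 * (1 - a ^ 2) - f ^ 2 * ϑ ^ 2) ^ 2 + 4 * f ^ 2 * ϑ ^ 2 * σ ^ 2)

def radicand (a f σ ϑ : ℝ) : ℝ :=
  (σ ^ 2 * (1 - a ^ 2) - f ^ 2 * ϑ ^ 2) ^ 2 + 4 * f ^ 2 * ϑ ^ 2 * σ ^ 2

variable {a f σ ϑ : ℝ}

theorem radicand_pos (hf : f ≠ 0) (hϑ : ϑ ≠ 0) : 0 < radicand a f σ ϑ := by
  unfold radicand
  rcases eq_or_ne σ 0 with rfl | hσ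
  · have : 0 < f ^ 2 * ϑ ^ 2 := by positivity
    nlinarith
  · positivity

theorem hasDerivAt_radicand :
    HasDerivAt (radicand a f σ) (4 * f ^ 2 * ϑ * (f ^ 2 * ϑ ^ 2 + σ ^ 2 * (1 + a ^ 2))) ϑ := by
  have hsq : HasDerivAt (fun t : ℝ => t ^ 2) (2 * ϑ) ϑ := by simpa using hasDerivAt_pow 2 ϑ
  have := (((hsq.const_mul (f ^ 2)).const_sub (σ ^ 2 * (1 - a ^ 2))).pow 2).add
    ((hsq.const_mul (4 * f ^ 2)).mul_const (σ ^ 2))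
  exact this.congr_deriv (by push_cast; ring)

theorem hasDerivAt_gammaStar (hf : f ≠ 0) (hR : 0 < radicand a f σ ϑ) :
    HasDerivAt (gammaStar a f σ)
      (ϑ + ϑ * (f ^ 2 * ϑ ^ 2 + σ ^ 2 * (1 + a ^ 2)) / Real.sqrt (radicand a f σ ϑ)) ϑ := by
  have hsq : HasDerivAt (fun t : ℝ => t ^ 2) (2 * ϑ) ϑ := by simpa using hasDerivAt_pow 2 ϑ
  have := (((hsq.const_mul (f ^ 2)).sub_const (σ ^ 2 * (1 - a ^ 2))).div_const (2 * f ^ 2)).add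
    ((hasDerivAt_radicand.sqrt hR.ne').const_mul (1 / (2 * f ^ 2)))
  have hsqrt : Real.sqrt (radicand a f σ ϑ) ≠ 0 := (Real.sqrt_pos.mpr hR).ne'
  exact this.congr_deriv (by field_simp; ring)

theorem gammaStar_deriv_pos_strictMono_general (a f σ : ℝ)
    (hf : f ≠ 0) :
    (∀ ϑ : ℝ, 0 < ϑ →
      HasDerivAt (gammaStar a f σ)
        (ϑ + ϑ * (f ^ 2 * ϑ ^ 2 + σ ^ 2 * (1 + a ^ 2)) /
          Real.sqrt ((σ ^ 2 * (1 - a ^ 2) - f ^ 2 * ϑ ^ 2) ^ 2 + 4 * f ^ 2 * ϑ ^ 2 * σ ^ 2)) ϑ) ∧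
    (∀ ϑ : ℝ, 0 < ϑ →
      0 < ϑ + ϑ * (f ^ 2 * ϑ ^ 2 + σ ^ 2 * (1 + a ^ 2)) /
        Real.sqrt ((σ ^ 2 * (1 - a ^ 2) - f ^ 2 * ϑ ^ 2) ^ 2 + 4 * f ^ 2 * ϑ ^ 2 * σ ^ 2)) ∧
    StrictMonoOn (gammaStar a f σ) (Set.Ioi 0) := by
  have hderiv (ϑ : ℝ) (hϑ : 0 < ϑ) := hasDerivAt_gammaStar (a := a) (σ := σ) hf
    (radicand_pos hf hϑ.ne')
  have hpos (ϑ : ℝ) (hϑ : 0 < ϑ) :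
      0 < ϑ + ϑ * (f ^ 2 * ϑ ^ 2 + σ ^ 2 * (1 + a ^ 2)) / Real.sqrt (radicand a f σ ϑ) := by
    positivity
  refine ⟨hderiv, hpos, strictMonoOn_of_deriv_pos (convex_Ioi 0) ?_ ?_⟩
  · exact fun ϑ hϑ => (hderiv ϑ hϑ).continuousAt.continuousWithinAt
  · rw [interior_Ioi]
    intro ϑ hϑ
    rw [(hderiv ϑ hϑ).deriv]
    exact hpos ϑ hϑ

/-- `ϑ ↦ γ_*(ϑ)` is differentiable on `(0, ∞)` with derivative
`γ̇_*(ϑ) = ϑ + ϑ·(f²ϑ² + σ²(1+a²))/√((σ²(1−a²) − f²ϑ²)² + 4f²ϑ²σ²)`, the derivative is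
strictly positive, and `γ_*` is strictly increasing on `(0, ∞)`. -/
theorem gammaStar_deriv_pos_strictMono (a f σ : ℝ)
    (ha : a ^ 2 < 1) (hf : f ≠ 0) (hσ : 0 < σ) :
    (∀ ϑ : ℝ, 0 < ϑ →
      HasDerivAt (gammaStar a f σ)
        (ϑ + ϑ * (f ^ 2 * ϑ ^ 2 + σ ^ 2 * (1 + a ^ 2)) /
          Real.sqrt ((σ ^ 2 * (1 - a ^ 2) - f ^ 2 * ϑ ^ 2) ^ 2 + 4 * f ^ 2 * ϑ ^ 2 * σ ^ 2)) ϑ) ∧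
    (∀ ϑ : ℝ, 0 < ϑ →
      0 < ϑ + ϑ * (f ^ 2 * ϑ ^ 2 + σ ^ 2 * (1 + a ^ 2)) /
        Real.sqrt ((σ ^ 2 * (1 - a ^ 2) - f ^ 2 * ϑ ^ 2) ^ 2 + 4 * f ^ 2 * ϑ ^ 2 * σ ^ 2)) ∧
    StrictMonoOn (gammaStar a f σ) (Set.Ioi 0) :=
  gammaStar_deriv_pos_strictMono_general a f σ hf

end HiddenAR
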